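/- Let R be a commutative Noetherian ring of finite Krull dimension. If every short exact sequence of R-modules is GP-pure exact exactly when it is GI-copure exact, then R is virtually Gorenstein, i.e. GP^⊥ = ^⊥GI. -/

import Mathlib

open CategoryTheory Opposite Limits MonoidalCategory

universe u

variable {R : Type u} [CommRing R]

/-- `Q` is a Gorenstein projective module: it is the cokernel `Coker (P₁ → P₀)` of a totally
acyclic complex of projective modules, i.e. an exact complex of projectives which stays exact
under `Hom(-, P)` for every projective `P`. -/
def IsGorensteinProjective (Q : ModuleCat.{u} R) : Prop :=
  ∃ C : ChainComplex (ModuleCat.{u} R) ℤ,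
    (∀ i, Projective (C.X i)) ∧
    (∀ i, C.ExactAt i) ∧
    Nonempty (Q ≅ cokernel (C.d 1 0)) ∧
    ∀ P : ModuleCat.{u} R, Projective P →
      ∀ (i : ℤ) (f : C.X i ⟶ P), C.d (i + 1) i ≫ f = 0 →
        ∃ g : C.X (i - 1) ⟶ P, f = C.d i (i - 1) ≫ g

/-- `E` is a Gorenstein injective module: it is the kernel `Ker (I⁰ → I¹)` of a totally acyclic
complex of injective modules, i.e. an exact complex of injectives which stays exact under
`Hom(I, -)` for every injective `I`. -/
def IsGorensteinInjective (E : ModuleCat.{u} R) : Prop :=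
  ∃ C : CochainComplex (ModuleCat.{u} R) ℤ,
    (∀ i, Injective (C.X i)) ∧
    (∀ i, C.ExactAt i) ∧
    Nonempty (E ≅ kernel (C.d 0 1)) ∧
    ∀ I : ModuleCat.{u} R, Injective I →
      ∀ (i : ℤ) (f : I ⟶ C.X i), f ≫ C.d i (i + 1) = 0 →
        ∃ g : I ⟶ C.X (i - 1), f = g ≫ C.d (i - 1) i

/-- `M` is a Gorenstein flat module: it is a cokernel in an exact complex of flat modules which
remains exact after tensoring with any injective module. -/
def IsGorensteinFlat (M : ModuleCat.{u} R) : Prop :=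
  ∃ C : ChainComplex (ModuleCat.{u} R) ℤ,
    (∀ i, Module.Flat R (C.X i)) ∧
    (∀ i, C.ExactAt i) ∧
    Nonempty (M ≅ cokernel (C.d 1 0)) ∧
    ∀ I : ModuleCat.{u} R, Injective I → ∀ i : ℤ,
      (((tensorLeft I).mapHomologicalComplex (ComplexShape.down ℤ)).obj C).ExactAt i

/-- A short exact sequence `0 → X₁ → X₂ → X₃ → 0` is `𝒳`-pure exact if
`Hom(U, X₂) → Hom(U, X₃)` is surjective for every `U ∈ 𝒳`. -/
def XPureExact (𝒳 : ModuleCat.{u} R → Prop) (S : ShortComplex (ModuleCat.{u} R)) : Prop :=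
  ∀ U : ModuleCat.{u} R, 𝒳 U → ∀ φ : U ⟶ S.X₃, ∃ ψ : U ⟶ S.X₂, ψ ≫ S.g = φ

/-- A short exact sequence `0 → X₁ → X₂ → X₃ → 0` is `𝒳`-copure exact if
`Hom(X₂, V) → Hom(X₁, V)` is surjective for every `V ∈ 𝒳`. -/
def XCopureExact (𝒳 : ModuleCat.{u} R → Prop) (S : ShortComplex (ModuleCat.{u} R)) : Prop :=
  ∀ V : ModuleCat.{u} R, 𝒳 V → ∀ φ : S.X₁ ⟶ V, ∃ ψ : S.X₂ ⟶ V, S.f ≫ ψ = φ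

/-- `M` is `𝒳`-pure flat: `M ⊗ -` leaves every `𝒳`-pure exact short exact sequence exact. -/
def XPureFlat (𝒳 : ModuleCat.{u} R → Prop) (M : ModuleCat.{u} R) : Prop :=
  ∀ S : ShortComplex (ModuleCat.{u} R), S.ShortExact → XPureExact 𝒳 S →
    Function.Injective ((tensorLeft M).map S.f)

/-- `N` is `𝒳`-pure injective: `Hom(-, N)` leaves every `𝒳`-pure exact short exact
sequence exact. -/
def XPureInjective (𝒳 : ModuleCat.{u} R → Prop) (N : ModuleCat.{u} R) : Prop :=
  ∀ S : ShortComplex (ModuleCat.{u} R), S.ShortExact → XPureExact 𝒳 S →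
    ∀ φ : S.X₁ ⟶ N, ∃ ψ : S.X₂ ⟶ N, S.f ≫ ψ = φ

/-- `M` is `𝒳`-pure projective: `Hom(M, -)` leaves every `𝒳`-pure exact short exact
sequence exact. -/
def XPureProjective (𝒳 : ModuleCat.{u} R → Prop) (M : ModuleCat.{u} R) : Prop :=
  ∀ S : ShortComplex (ModuleCat.{u} R), S.ShortExact → XPureExact 𝒳 S →
    ∀ φ : M ⟶ S.X₃, ∃ ψ : M ⟶ S.X₂, ψ ≫ S.g = φ

/-- `GP`-pure exactness: `Hom(Q, -)` leaves the sequence exact for all Gorenstein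
projective `Q`. -/
abbrev GPPureExact (S : ShortComplex (ModuleCat.{u} R)) : Prop :=
  XPureExact IsGorensteinProjective S

/-- `GI`-copure exactness: `Hom(-, E)` leaves the sequence exact for all Gorenstein
injective `E`. -/
abbrev GICopureExact (S : ShortComplex (ModuleCat.{u} R)) : Prop :=
  XCopureExact IsGorensteinInjective S

abbrev GPPureProjective (M : ModuleCat.{u} R) : Prop :=
  XPureProjective IsGorensteinProjective M

abbrev GPPureInjective (M : ModuleCat.{u} R) : Prop :=
  XPureInjective IsGorensteinProjective M

abbrev GPPureFlat (M : ModuleCat.{u} R) : Prop :=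
  XPureFlat IsGorensteinProjective M

/-- `Ext^n_R(M, N)` vanishes. -/
abbrev extVanish (n : ℕ) (M N : ModuleCat.{u} R) : Prop :=
  Subsingleton (((Ext R (ModuleCat.{u} R) n).obj (op M)).obj N)

/-- `M` belongs to `GP^⊥`. -/
abbrev MemGPperp (M : ModuleCat.{u} R) : Prop :=
  ∀ Q : ModuleCat.{u} R, IsGorensteinProjective Q → extVanish 1 Q M

/-- `M` belongs to `^⊥GI`. -/
abbrev MemPerpGI (M : ModuleCat.{u} R) : Prop :=
  ∀ E : ModuleCat.{u} R, IsGorensteinInjective E → extVanish 1 M E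

/-- Gorenstein projective dimension of `M` is at most `n`: there is a resolution
`0 → G_n → ⋯ → G_0 → M → 0` by Gorenstein projective modules. -/
def GpdLE : ℕ → ModuleCat.{u} R → Prop
  | 0, M => IsGorensteinProjective M
  | n + 1, M =>
    ∃ S : ShortComplex (ModuleCat.{u} R), S.ShortExact ∧ Nonempty (S.X₃ ≅ M) ∧
      IsGorensteinProjective S.X₂ ∧ GpdLE n S.X₁

/-- Gorenstein injective dimension of `M` is at most `n`: there is a coresolution
`0 → M → E⁰ → ⋯ → Eⁿ → 0` by Gorenstein injective modules. -/
def GidLE : ℕ → ModuleCat.{u} R → Prop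
  | 0, M => IsGorensteinInjective M
  | n + 1, M =>
    ∃ S : ShortComplex (ModuleCat.{u} R), S.ShortExact ∧ Nonempty (S.X₁ ≅ M) ∧
      IsGorensteinInjective S.X₂ ∧ GidLE n S.X₃

/-- Gorenstein flat dimension of `M` is at most `n`. -/
def GfdLE : ℕ → ModuleCat.{u} R → Prop
  | 0, M => IsGorensteinFlat M
  | n + 1, M =>
    ∃ S : ShortComplex (ModuleCat.{u} R), S.ShortExact ∧ Nonempty (S.X₃ ≅ M) ∧
      IsGorensteinFlat S.X₂ ∧ GfdLE n S.X₁

/-- The Pontryagin dual `M⁺ = Hom_ℤ(M, ℚ/ℤ)` as an `R`-module. -/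
noncomputable def characterDual (M : ModuleCat.{u} R) : ModuleCat.{u} R :=
  ModuleCat.of R (CharacterModule M)

/-- `R` is a coherent ring: every finitely generated ideal is finitely presented. -/
def IsCoherentRing (R : Type u) [CommRing R] : Prop :=
  ∀ I : Ideal R, I.FG → Module.FinitePresentation R I

/-- `φ : G → M` is a Gorenstein projective precover. -/
def IsGPPrecover {G M : ModuleCat.{u} R} (φ : G ⟶ M) : Prop :=
  IsGorensteinProjective G ∧
    ∀ G' : ModuleCat.{u} R, IsGorensteinProjective G' →
      ∀ ψ : G' ⟶ M, ∃ χ : G' ⟶ G, χ ≫ φ = ψ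

/-- The short exact sequence `0 → Im d_{i+1} → X_i → Im d_i → 0` extracted from a complex. -/
noncomputable def imagesShortComplex (C : ChainComplex (ModuleCat.{u} R) ℤ) (i : ℤ) :
    ShortComplex (ModuleCat.{u} R) :=
  ShortComplex.mk (image.ι (C.d (i + 1) i)) (factorThruImage (C.d i (i - 1)))
    (by
      rw [← cancel_epi (factorThruImage (C.d (i + 1) i)),
        ← cancel_mono (image.ι (C.d i (i - 1)))]
      simp)

/-! If `M ∈ GP^⊥`, the sequence `0 → M → I → I/M → 0` with `I` injective is GP-pure exact, hence
GI-copure exact. A Gorenstein injective `E` sits in `0 → E → I⁰ → E¹ → 0` with `I⁰` injective and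
`E¹` again Gorenstein injective; copurity extends any `M → E¹` to `I`, total acyclicity lifts
`I → E¹` through `I⁰`, and a module all of whose maps to `E¹` lift through `I⁰` has
`Ext¹(M, E) = 0`.

Dually, if `M ∈ ^⊥GI`, the syzygy sequence `0 → K → P₀ → M → 0` is GI-copure exact, hence
GP-pure exact. A Gorenstein projective `Q` has a projective resolution, cut out of its totally
acyclic complex, whose first syzygy `Q'` is again Gorenstein projective; purity lifts any
`Q' → M` to `P₀`, total acyclicity extends `Q' → P₀` over the resolution, so `Ext¹(Q, M) = 0`.
-/

lemma extVanish_iff_isZero (n : ℕ) (X Y : ModuleCat.{u} R) :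
    extVanish n X Y ↔ IsZero (((Ext R (ModuleCat.{u} R) n).obj (op X)).obj Y) :=
  ModuleCat.isZero_iff_subsingleton.symm

lemma extVanish_of_iso_right {n : ℕ} {X Y Y' : ModuleCat.{u} R} (e : Y ≅ Y')
    (h : extVanish n X Y') : extVanish n X Y := by
  rw [extVanish_iff_isZero] at h ⊢
  exact h.of_iso (((Ext R (ModuleCat.{u} R) n).obj (op X)).mapIso e)

lemma extVanish_of_iso_left {n : ℕ} {X X' Y : ModuleCat.{u} R} (e : X ≅ X')
    (h : extVanish n X' Y) : extVanish n X Y := by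
  rw [extVanish_iff_isZero] at h ⊢
  exact h.of_iso (((Ext R (ModuleCat.{u} R) n).mapIso e.op).symm.app Y)

namespace CategoryTheory.ProjectiveResolution

variable {X : ModuleCat.{u} R} (P : ProjectiveResolution X)

lemma extVanish_one_iff_cocycle (Y : ModuleCat.{u} R) :
    extVanish 1 X Y ↔ ∀ f : P.complex.X 1 ⟶ Y, P.complex.d 2 1 ≫ f = 0 →
      ∃ g : P.complex.X 0 ⟶ Y, P.complex.d 1 0 ≫ g = f := by
  rw [extVanish_iff_isZero, ((P.isoExt 1 Y).isZero_iff),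
    ← HomologicalComplex.exactAt_iff_isZero_homology,
    HomologicalComplex.exactAt_iff' _ 0 1 2 (by simp) (by simp),
    ShortComplex.moduleCat_exact_iff]
  rfl

-- `X₃ := X` rather than the defeq but syntactically different `((single₀ _).obj X).X 0`,
-- so that morphisms out of `X` compose with `g` without casts.
noncomputable abbrev syzygySequence : ShortComplex (ModuleCat.{u} R) :=
  ShortComplex.mk (X₃ := X) (kernel.ι (P.π.f 0)) (P.π.f 0) (kernel.condition _)

lemma shortExact_syzygySequence : P.syzygySequence.ShortExact where
  exact := ShortComplex.exact_of_f_is_kernel _ (kernelIsKernel _)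
  mono_f := equalizer.ι_mono
  epi_g := inferInstanceAs (Epi (P.π.f 0))

lemma extVanish_one_iff_forall_extend (Y : ModuleCat.{u} R) :
    extVanish 1 X Y ↔ ∀ φ : P.syzygySequence.X₁ ⟶ Y,
      ∃ g : P.syzygySequence.X₂ ⟶ Y, P.syzygySequence.f ≫ g = φ := by
  let κ := kernel.lift (P.π.f 0) (P.complex.d 1 0) P.complex_d_comp_π_f_zero
  have hκ : κ ≫ kernel.ι _ = P.complex.d 1 0 := kernel.lift_ι _ _ _
  have : Epi κ := P.exact₀.epi_kernelLift
  have hdκ : P.complex.d 2 1 ≫ κ = 0 := by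
    rw [← cancel_mono (kernel.ι _), Category.assoc, hκ, HomologicalComplex.d_comp_d,
      zero_comp]
  have hexact : (ShortComplex.mk _ _ hdκ).Exact := by
    let incl : ShortComplex.mk _ _ hdκ ⟶ ShortComplex.mk _ _ (P.complex.d_comp_d 2 1 0) :=
      { τ₁ := 𝟙 _, τ₂ := 𝟙 _, τ₃ := kernel.ι _
        comm₁₂ := by simp
        comm₂₃ := (Category.id_comp _).trans hκ.symm }
    exact (ShortComplex.exact_iff_of_epi_of_isIso_of_mono incl).2 (P.exact_succ 0)
  rw [P.extVanish_one_iff_cocycle]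
  constructor
  · intro H φ
    obtain ⟨g, hg⟩ := H (κ ≫ φ) (by rw [← Category.assoc, hdκ, zero_comp])
    exact ⟨g, by rw [← cancel_epi κ, ← hg, ← hκ, Category.assoc]⟩
  · intro H f hf
    obtain ⟨g, hg⟩ := H (hexact.desc f hf)
    exact ⟨g, by rw [← hκ, Category.assoc, hg, hexact.g_desc]⟩

end CategoryTheory.ProjectiveResolution

namespace CategoryTheory.ShortComplex.ShortExact

variable {S : ShortComplex (ModuleCat.{u} R)}

lemma exists_lift_of_extVanish_one (hS : S.ShortExact) {U : ModuleCat.{u} R}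
    (hU : extVanish 1 U S.X₁) (φ : U ⟶ S.X₃) : ∃ ψ : U ⟶ S.X₂, ψ ≫ S.g = φ := by
  let P := ProjectiveResolution.of U
  let T := P.syzygySequence
  have hT : T.ShortExact := P.shortExact_syzygySequence
  have := hS.mono_f
  have := hS.epi_g
  have := hT.epi_g
  let ψ₀ := Projective.factorThru (T.g ≫ φ) S.g
  have hψ₀ : ψ₀ ≫ S.g = T.g ≫ φ := Projective.factorThru_comp _ _
  let τ := hS.exact.lift (T.f ≫ ψ₀) (by rw [Category.assoc, hψ₀, T.zero_assoc, zero_comp])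
  obtain ⟨σ, hσ⟩ := (P.extVanish_one_iff_forall_extend _).1 hU τ
  refine ⟨hT.exact.desc (ψ₀ - σ ≫ S.f) ?_, ?_⟩
  · rw [Preadditive.comp_sub, ← Category.assoc, hσ, hS.exact.lift_f, sub_self]
  · rw [← cancel_epi T.g, hT.exact.g_desc_assoc, Preadditive.sub_comp, hψ₀, Category.assoc,
      S.zero, comp_zero, sub_zero]

lemma extVanish_one_of_forall_lift (hS : S.ShortExact) [Injective S.X₂] {M : ModuleCat.{u} R}
    (hM : ∀ v : M ⟶ S.X₃, ∃ t : M ⟶ S.X₂, t ≫ S.g = v) : extVanish 1 M S.X₁ := by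
  let P := ProjectiveResolution.of M
  let T := P.syzygySequence
  have hT : T.ShortExact := P.shortExact_syzygySequence
  have := hT.mono_f
  have := hT.epi_g
  have := hS.mono_f
  rw [P.extVanish_one_iff_forall_extend]
  intro φ
  let w := Injective.factorThru (φ ≫ S.f) T.f
  have hw : T.f ≫ w = φ ≫ S.f := Injective.comp_factorThru _ _
  obtain ⟨t, ht⟩ := hM (hT.exact.desc (w ≫ S.g)
    (by rw [← Category.assoc, hw, Category.assoc, S.zero, comp_zero]))
  refine ⟨hS.exact.lift (w - T.g ≫ t) ?_, ?_⟩
  · rw [Preadditive.sub_comp, Category.assoc, ht, hT.exact.g_desc, sub_self]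
  · rw [← cancel_mono S.f, Category.assoc, hS.exact.lift_f, Preadditive.comp_sub, hw,
      T.zero_assoc, zero_comp, sub_zero]

end CategoryTheory.ShortComplex.ShortExact

namespace ChainComplex

variable {V : Type*} [Category V] [Abelian V]

@[simps]
def shiftSucc (C : ChainComplex V ℤ) : ChainComplex V ℤ where
  X i := C.X (i + 1)
  d i j := C.d (i + 1) (j + 1)
  shape i j h := C.shape _ _ (by simp only [ComplexShape.down_Rel] at h ⊢; omega)

lemma exactAt_shiftSucc {C : ChainComplex V ℤ} {i : ℤ} (h : C.ExactAt (i + 1)) :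
    C.shiftSucc.ExactAt i := by
  rw [HomologicalComplex.exactAt_iff' _ (i + 1) i (i - 1) (by simp) (by simp)]
  exact (HomologicalComplex.exactAt_iff' C (i + 1 + 1) (i + 1) (i - 1 + 1) (by simp)
    (by simp)).1 h

@[simps]
def truncNat (C : ChainComplex V ℤ) : ChainComplex V ℕ where
  X n := C.X n
  d i j := C.d i j
  shape i j h := C.shape _ _ (by simp only [ComplexShape.down_Rel] at h ⊢; omega)

structure IsTotallyAcyclic (C : ChainComplex V ℤ) : Prop where
  projective (i : ℤ) : Projective (C.X i)
  exactAt (i : ℤ) : C.ExactAt i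
  exists_factor (P : V) : Projective P → ∀ (i : ℤ) (f : C.X i ⟶ P), C.d (i + 1) i ≫ f = 0 →
    ∃ g : C.X (i - 1) ⟶ P, f = C.d i (i - 1) ≫ g

namespace IsTotallyAcyclic

variable {C : ChainComplex V ℤ}

lemma shiftSucc (hC : C.IsTotallyAcyclic) : C.shiftSucc.IsTotallyAcyclic where
  projective i := hC.projective (i + 1)
  exactAt i := exactAt_shiftSucc (hC.exactAt (i + 1))
  exists_factor P hP i f hf := by
    obtain ⟨g, hg⟩ := hC.exists_factor P hP (i + 1) f hf
    refine ⟨(C.XIsoOfEq (by ring : i - 1 + 1 = i + 1 - 1)).hom ≫ g, ?_⟩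
    exact hg.trans (C.d_comp_XIsoOfEq_hom_assoc _ (i + 1) g).symm

lemma exactAt_truncNat_succ (hC : C.IsTotallyAcyclic) (n : ℕ) : C.truncNat.ExactAt (n + 1) := by
  rw [HomologicalComplex.exactAt_iff' _ (n + 2) (n + 1) n (by simp) (by simp)]
  exact (HomologicalComplex.exactAt_iff' C ((n : ℤ) + 1 + 1) ((n : ℤ) + 1) n (by simp)
    (by simp)).1 (hC.exactAt _)

noncomputable def projectiveResolution (hC : C.IsTotallyAcyclic) :
    ProjectiveResolution (cokernel (C.d 1 0)) where
  complex := C.truncNat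
  projective n := hC.projective n
  π := (toSingle₀Equiv _ _).symm ⟨cokernel.π (C.d 1 0), cokernel.condition _⟩
  quasiIso := ⟨fun n => by
    cases n with
    | zero =>
      rw [quasiIsoAt₀_iff, ShortComplex.quasiIso_iff_of_zeros']
      · refine (ShortComplex.exact_and_epi_g_iff_of_iso (S₂ := ShortComplex.mk _ _
          (cokernel.condition (C.d 1 0))) ?_).2
          ⟨ShortComplex.exact_of_g_is_cokernel _ (cokernelIsCokernel _), inferInstance⟩
        exact ShortComplex.isoMk (Iso.refl _) (Iso.refl _) (Iso.refl _)
          ((Category.id_comp _).trans (Category.comp_id _).symm)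
          (by
            dsimp
            exact (Category.id_comp _).trans ((toSingle₀Equiv_symm_apply_f_zero
              (C := C.truncNat) (f := cokernel.π (C.d 1 0)) (hf := cokernel.condition _)).symm.trans
              (Category.comp_id _).symm))
      · exact C.truncNat.shape 0 0 (by simp)
      all_goals rfl
    | succ n =>
      rw [quasiIsoAt_iff_exactAt' _ _ (exactAt_succ_single_obj _ _)]
      exact hC.exactAt_truncNat_succ n⟩

end IsTotallyAcyclic

end ChainComplex

namespace CochainComplex

variable {V : Type*} [Category V] [Abelian V]

-- Unlike `C⟦1⟧`, the differential carries no sign.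
@[simps]
def shiftSucc (C : CochainComplex V ℤ) : CochainComplex V ℤ where
  X i := C.X (i + 1)
  d i j := C.d (i + 1) (j + 1)
  shape i j h := C.shape _ _ (by simp only [ComplexShape.up_Rel] at h ⊢; omega)

lemma exactAt_shiftSucc {C : CochainComplex V ℤ} {i : ℤ} (h : C.ExactAt (i + 1)) :
    C.shiftSucc.ExactAt i := by
  rw [HomologicalComplex.exactAt_iff' _ (i - 1) i (i + 1) (by simp) (by simp)]
  exact (HomologicalComplex.exactAt_iff' C (i - 1 + 1) (i + 1) (i + 1 + 1) (by simp)
    (by simp)).1 h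

noncomputable abbrev kernelSequence (C : CochainComplex V ℤ) : ShortComplex V :=
  ShortComplex.mk (kernel.ι (C.d 0 1)) (kernel.lift (C.d 1 2) (C.d 0 1) (C.d_comp_d 0 1 2))
    (by rw [← cancel_mono (kernel.ι _), Category.assoc, kernel.lift_ι, kernel.condition,
      zero_comp])

structure IsTotallyAcyclic (C : CochainComplex V ℤ) : Prop where
  injective (i : ℤ) : Injective (C.X i)
  exactAt (i : ℤ) : C.ExactAt i
  exists_factor (I : V) : Injective I → ∀ (i : ℤ) (f : I ⟶ C.X i), f ≫ C.d i (i + 1) = 0 →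
    ∃ g : I ⟶ C.X (i - 1), f = g ≫ C.d (i - 1) i

namespace IsTotallyAcyclic

variable {C : CochainComplex V ℤ}

lemma shiftSucc (hC : C.IsTotallyAcyclic) : C.shiftSucc.IsTotallyAcyclic where
  injective i := hC.injective (i + 1)
  exactAt i := exactAt_shiftSucc (hC.exactAt (i + 1))
  exists_factor I hI i f hf := by
    obtain ⟨g, hg⟩ := hC.exists_factor I hI (i + 1) f hf
    refine ⟨g ≫ (C.XIsoOfEq (by ring : i + 1 - 1 = i - 1 + 1)).hom, ?_⟩
    exact hg.trans ((congrArg (g ≫ ·) (C.XIsoOfEq_hom_comp_d _ (i + 1)).symm).trans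
      (Category.assoc _ _ _).symm)

lemma shortExact_kernelSequence (hC : C.IsTotallyAcyclic) : C.kernelSequence.ShortExact where
  exact := by
    let incl : C.kernelSequence ⟶ ShortComplex.mk _ _ (kernel.condition (C.d 0 1)) :=
      { τ₁ := 𝟙 _, τ₂ := 𝟙 _, τ₃ := kernel.ι _
        comm₁₂ := by simp
        comm₂₃ := by simp }
    exact (ShortComplex.exact_iff_of_epi_of_isIso_of_mono incl).2
      (ShortComplex.exact_of_f_is_kernel _ (kernelIsKernel _))
  mono_f := equalizer.ι_mono
  epi_g := ((HomologicalComplex.exactAt_iff' C 0 1 2 (by simp) (by simp)).1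
    (hC.exactAt 1)).epi_kernelLift

end IsTotallyAcyclic

end CochainComplex

lemma ChainComplex.IsTotallyAcyclic.isGorensteinProjective_cokernel
    {C : ChainComplex (ModuleCat.{u} R) ℤ} (hC : C.IsTotallyAcyclic) :
    IsGorensteinProjective (cokernel (C.d 2 1)) :=
  ⟨C.shiftSucc, hC.shiftSucc.projective, hC.shiftSucc.exactAt, ⟨Iso.refl _⟩,
    hC.shiftSucc.exists_factor⟩

lemma CochainComplex.IsTotallyAcyclic.isGorensteinInjective_kernel
    {C : CochainComplex (ModuleCat.{u} R) ℤ} (hC : C.IsTotallyAcyclic) :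
    IsGorensteinInjective (kernel (C.d 1 2)) :=
  ⟨C.shiftSucc, hC.shiftSucc.injective, hC.shiftSucc.exactAt, ⟨Iso.refl _⟩,
    hC.shiftSucc.exists_factor⟩

lemma ChainComplex.IsTotallyAcyclic.extVanish_one_cokernel_iff
    {C : ChainComplex (ModuleCat.{u} R) ℤ} (hC : C.IsTotallyAcyclic) (Y : ModuleCat.{u} R) :
    extVanish 1 (cokernel (C.d 1 0)) Y ↔
      ∀ f : C.X 1 ⟶ Y, C.d 2 1 ≫ f = 0 → ∃ g : C.X 0 ⟶ Y, C.d 1 0 ≫ g = f :=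
  hC.projectiveResolution.extVanish_one_iff_cocycle Y

lemma memGPperp_of_gpPureExact {S : ShortComplex (ModuleCat.{u} R)} [Projective S.X₂]
    (hS : GPPureExact S) : MemGPperp S.X₃ := by
  rintro Q ⟨C, hproj, hex, ⟨e⟩, hfactor⟩
  have hC : C.IsTotallyAcyclic := ⟨hproj, hex, hfactor⟩
  refine extVanish_of_iso_left e ((hC.extVanish_one_cokernel_iff _).2 ?_)
  intro f hf
  obtain ⟨ψ, hψ⟩ := hS _ hC.isGorensteinProjective_cokernel (cokernel.desc _ f hf)
  obtain ⟨g, hg⟩ : ∃ g : C.X 0 ⟶ S.X₂, cokernel.π _ ≫ ψ = C.d 1 0 ≫ g :=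
    hC.exists_factor S.X₂ inferInstance 1 (cokernel.π _ ≫ ψ) (by simp)
  exact ⟨g ≫ S.g, by rw [← Category.assoc, ← hg, Category.assoc, hψ, cokernel.π_desc]⟩

lemma memPerpGI_of_giCopureExact {S : ShortComplex (ModuleCat.{u} R)} [Injective S.X₂]
    (hS : GICopureExact S) : MemPerpGI S.X₁ := by
  rintro E ⟨D, hinj, hex, ⟨e⟩, hfactor⟩
  have hD : D.IsTotallyAcyclic := ⟨hinj, hex, hfactor⟩
  have : Injective D.kernelSequence.X₂ := hD.injective 0
  refine extVanish_of_iso_right e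
    (hD.shortExact_kernelSequence.extVanish_one_of_forall_lift fun v => ?_)
  obtain ⟨ψ, hψ⟩ := hS _ hD.isGorensteinInjective_kernel v
  obtain ⟨t, ht⟩ : ∃ t : S.X₂ ⟶ D.X 0, ψ ≫ kernel.ι _ = t ≫ D.d 0 1 :=
    hD.exists_factor S.X₂ inferInstance 1 (ψ ≫ kernel.ι _) (by simp)
  refine ⟨S.f ≫ t, ?_⟩
  rw [← cancel_mono (kernel.ι (D.d 1 2)), Category.assoc, Category.assoc, kernel.lift_ι, ← ht,
    ← Category.assoc, hψ]

theorem stmt17_general {R : Type u} [CommRing R]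
    (h : ∀ S : ShortComplex (ModuleCat.{u} R), S.ShortExact →
      (GPPureExact S ↔ GICopureExact S)) :
    ∀ M : ModuleCat.{u} R, MemGPperp M ↔ MemPerpGI M := by
  intro M
  constructor
  · intro hM
    let S := ShortComplex.mk (Injective.ι M) (cokernel.π _) (cokernel.condition _)
    have hS : S.ShortExact :=
      { exact := ShortComplex.exact_of_g_is_cokernel _ (cokernelIsCokernel _) }
    have : Injective S.X₂ := inferInstanceAs (Injective (Injective.under M))
    exact memPerpGI_of_giCopureExact <|
      (h S hS).1 fun U hU => hS.exists_lift_of_extVanish_one (hM U hU)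
  · intro hM
    let P := ProjectiveResolution.of M
    exact memGPperp_of_gpPureExact <| (h _ P.shortExact_syzygySequence).2 fun V hV =>
      (P.extVanish_one_iff_forall_extend V).1 (hM V hV)

/-- Over a Noetherian ring of finite Krull dimension, if `GP`-pure exactness
and `GI`-copure exactness of short exact sequences coincide, then `R` is virtually
Gorenstein. -/
theorem stmt17 {R : Type u} [CommRing R] (hNoeth : IsNoetherianRing R)
    (hdim : ringKrullDim R < ⊤)
    (h : ∀ S : ShortComplex (ModuleCat.{u} R), S.ShortExact →
      (GPPureExact S ↔ GICopureExact S)) :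
    ∀ M : ModuleCat.{u} R, MemGPperp M ↔ MemPerpGI M :=
  stmt17_general h
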